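/- Correctness of reuse across iterations (Theorem 1): Let W_0, W_1, ..., W_T be a sequence of workflow DAGs, and suppose the result assigned to each node at iteration t is determined as follows: at iteration 0 every node is computed from scratch; at iteration t+1, every original node (a node with no equivalent node in iteration t) is recomputed from the results assigned to its parents, and every non-original node is either recomputed from the results assigned to its parents or assigned the result that its equivalent node received at iteration t. Then for every t and every node n of W_t, the result assigned to n equals val(n), the value obtained by computing W_t entirely from scratch. -/

import Mathlib

/-- A workflow DAG: a finite directed acyclic graph whose nodes are labeled by
operators. -/
structure WDag (α : Type) where
  Node : Type
  nodeFinite : Finite Node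
  parents : Node → List Node
  op : Node → List α → α
  acyclic : WellFounded fun a b => a ∈ parents b

/-- The value of a node, defined by well-founded recursion on the DAG: the
result of applying the node's operator to the tuple of values of its parents. -/
noncomputable def WDag.val {α : Type} (G : WDag α) : G.Node → α :=
  G.acyclic.fix (C := fun _ => α) fun n rec =>
    G.op n ((G.parents n).attach.map fun p => rec p.1 p.2)

/-- Node equivalence between nodes of two workflow DAGs. -/
inductive NodeEquiv {α : Type} (G G' : WDag α) : G.Node → G'.Node → Prop where
  | intro (n : G.Node) (n' : G'.Node)
      (hop : G.op n = G'.op n')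
      (hlen : (G.parents n).length = (G'.parents n').length)
      (hpar : ∀ (k : ℕ) (h : k < (G.parents n).length) (h' : k < (G'.parents n').length),
        NodeEquiv G G' ((G.parents n).get ⟨k, h⟩) ((G'.parents n').get ⟨k, h'⟩)) :
      NodeEquiv G G' n n'

/-!
Equivalent nodes have equal values: their operators agree and, inductively, so do the values of
corresponding parents. Hence a reused result is correct as soon as the result it is copied from
was, which is the induction hypothesis on the iteration; recomputed results are then correct by
well-founded induction on the DAG.
-/

theorem WDag.val_eq {α : Type} (G : WDag α) (n : G.Node) :
    G.val n = G.op n ((G.parents n).map G.val) := by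
  unfold WDag.val
  rw [G.acyclic.fix_eq]
  simp only [List.map_attach_eq_pmap, List.pmap_eq_map]

theorem WDag.eq_val_of_eq_op_or_eq_val {α : Type} (G : WDag α) (f : G.Node → α)
    (hf : ∀ n, f n = G.op n ((G.parents n).map f) ∨ f n = G.val n) (n : G.Node) :
    f n = G.val n := by
  induction n using G.acyclic.induction with
  | _ n ih =>
    refine (hf n).elim (fun hop => ?_) id
    rw [hop, G.val_eq, List.map_congr_left ih]

theorem NodeEquiv.val_eq {α : Type} {G G' : WDag α} {n : G.Node} {n' : G'.Node}
    (h : NodeEquiv G G' n n') : G.val n = G'.val n' := by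
  induction h with
  | intro n n' hop hlen _ ih =>
    rw [G.val_eq, G'.val_eq, hop]
    congr 1
    refine List.ext_get (by simpa using hlen) fun k hk hk' => ?_
    simp only [List.get_eq_getElem, List.getElem_map, List.length_map] at hk hk' ⊢
    exact ih k hk hk'

/-- Correctness of reuse across iterations, Theorem 1:
Let `W 0, W 1, …` be a sequence of workflow DAGs and `res t` the result
assigned to each node at iteration `t`, where:
* at iteration `0` every node is computed from scratch (its result is its
  operator applied to the results assigned to its parents);
* at iteration `t+1` every node is either recomputed from the results assigned
  to its parents, or (only possible when it is non-original, i.e., it has an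
  equivalent node in iteration `t`) assigned the result that an equivalent node
  received at iteration `t`.  (In particular every original node is
  recomputed.)
Then for every `t` and every node `n` of `W t`, the result assigned to `n`
equals `val n`, the value obtained by computing `W t` entirely from scratch. -/
theorem reuse_correct {α : Type} (W : ℕ → WDag α) (res : ∀ t, (W t).Node → α)
    (h0 : ∀ n : (W 0).Node,
      res 0 n = (W 0).op n (((W 0).parents n).map (res 0)))
    (hstep : ∀ (t : ℕ) (n : (W (t + 1)).Node),
      (res (t + 1) n = (W (t + 1)).op n (((W (t + 1)).parents n).map (res (t + 1)))) ∨
      (∃ m : (W t).Node, NodeEquiv (W (t + 1)) (W t) n m ∧ res (t + 1) n = res t m)) :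
    ∀ (t : ℕ) (n : (W t).Node), res t n = (W t).val n := by
  intro t
  induction t with
  | zero => exact (W 0).eq_val_of_eq_op_or_eq_val (res 0) fun n => Or.inl (h0 n)
  | succ t ih =>
    refine (W (t + 1)).eq_val_of_eq_op_or_eq_val (res (t + 1)) fun n => (hstep t n).imp_right ?_
    rintro ⟨m, hnm, hres⟩
    rw [hres, ih m, hnm.val_eq]
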